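/- (Theorem 1, pathwise form.) Fix a > 1 and λ ∈ (0,1), let (X_i)_{i≥1} be independent, identically distributed positive random variables with 0 < E[X_1] < ∞ and E[X_1²] = ∞ (as holds when P(X_1 > x) ~ x^{−α} with α ∈ (1,2)), and let A′ be the reordered on/off process built from (X_i) with queue Q(t) = sup_{0≤s≤t} ∫_s^t (A′(u) − 1) du. Then almost surely the time-averaged queue length (1/T) ∫_0^T Q(t) dt → ∞ as T → ∞, even though the mean arrival rate (utilisation) is λ < 1. -/

import Mathlib

/-!
During the on-period of cycle `i`, which has length `Xᵢ`, the queue grows at rate `a - 1`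
starting from a nonnegative value, so `∫ Q` over that cycle is at least `(a - 1) Xᵢ² / 2`.
Hence `∫₀^{T_N} Q ≥ (a - 1)/2 · Σ_{i<N} Xᵢ²`. By the strong law of large numbers `T_N` grows
linearly in `N`, whereas `E[X₁²] = ∞` forces `Σ_{i<N} Xᵢ² / N → ∞` almost surely (apply the
strong law to the truncations `min (Xᵢ²) M` and let `M → ∞`). So the time average of `Q` diverges.
-/

open MeasureTheory ProbabilityTheory Filter Finset Set Topology

noncomputable def queueLength (f : ℝ → ℝ) (t : ℝ) : ℝ :=
  ⨆ u : Icc (0 : ℝ) t, ∫ v in (u : ℝ)..t, f v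

section QueueLength

variable {f : ℝ → ℝ} {C c s t u w x : ℝ}

lemma abs_integral_le_of_abs_le (hC : ∀ v, 0 ≤ v → |f v| ≤ C) (hu : 0 ≤ u) (hut : u ≤ t) :
    |∫ v in u..t, f v| ≤ C * (t - u) := by
  have h := intervalIntegral.norm_integral_le_of_norm_le_const (a := u) (b := t) (f := f) (C := C)
    fun v hv => hC v (hu.trans (uIoc_of_le hut ▸ hv).1.le)
  rwa [Real.norm_eq_abs, abs_of_nonneg (sub_nonneg.2 hut)] at h

lemma bddAbove_range_integral (hC : ∀ v, 0 ≤ v → |f v| ≤ C) (t : ℝ) :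
    BddAbove (range fun u : Icc (0 : ℝ) t => ∫ v in (u : ℝ)..t, f v) := by
  have hC0 : 0 ≤ C := (abs_nonneg _).trans (hC 0 le_rfl)
  refine ⟨C * t, ?_⟩
  rintro _ ⟨⟨u, hu, hut⟩, rfl⟩
  calc _ ≤ C * (t - u) := (le_abs_self _).trans (abs_integral_le_of_abs_le hC hu hut)
    _ ≤ C * t := by nlinarith

lemma integral_le_queueLength (hC : ∀ v, 0 ≤ v → |f v| ≤ C) (hu : 0 ≤ u) (hut : u ≤ t) :
    ∫ v in u..t, f v ≤ queueLength f t :=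
  le_ciSup (bddAbove_range_integral hC t) (⟨u, hu, hut⟩ : Icc (0 : ℝ) t)

lemma queueLength_nonneg (hC : ∀ v, 0 ≤ v → |f v| ≤ C) (ht : 0 ≤ t) : 0 ≤ queueLength f t := by
  simpa using integral_le_queueLength hC ht le_rfl

lemma intervalIntegrable_of_integrableOn_Icc (hf : ∀ t, IntegrableOn f (Icc 0 t)) (hu : 0 ≤ u)
    (hut : u ≤ t) : IntervalIntegrable f volume u t :=
  (intervalIntegrable_iff_integrableOn_Icc_of_le hut).2 ((hf t).mono_set (Icc_subset_Icc_left hu))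

lemma queueLength_le_add_of_le (hf : ∀ t, IntegrableOn f (Icc 0 t))
    (hC : ∀ v, 0 ≤ v → |f v| ≤ C) (hs : 0 ≤ s) (hst : s ≤ t) :
    queueLength f t ≤ queueLength f s + C * (t - s) := by
  have : Nonempty (Icc (0 : ℝ) t) := ⟨⟨t, hs.trans hst, le_rfl⟩⟩
  refine ciSup_le fun ⟨u, hu, hut⟩ => ?_
  rcases le_total u s with hus | hsu
  · rw [← intervalIntegral.integral_add_adjacent_intervals
      (intervalIntegrable_of_integrableOn_Icc hf hu hus)
      (intervalIntegrable_of_integrableOn_Icc hf hs hst)]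
    linarith [integral_le_queueLength hC hu hus, le_abs_self (∫ v in s..t, f v),
      abs_integral_le_of_abs_le hC hs hst]
  · have hC0 : 0 ≤ C := (abs_nonneg _).trans (hC 0 le_rfl)
    have : C * (t - u) ≤ C * (t - s) := by gcongr
    linarith [queueLength_nonneg hC hs, le_abs_self (∫ v in u..t, f v),
      abs_integral_le_of_abs_le hC hu hut]

lemma queueLength_le_add_of_ge (hf : ∀ t, IntegrableOn f (Icc 0 t))
    (hC : ∀ v, 0 ≤ v → |f v| ≤ C) (hs : 0 ≤ s) (hst : s ≤ t) :
    queueLength f s ≤ queueLength f t + C * (t - s) := by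
  have : Nonempty (Icc (0 : ℝ) s) := ⟨⟨s, hs, le_rfl⟩⟩
  refine ciSup_le fun ⟨u, hu, hus⟩ => ?_
  have hsplit := intervalIntegral.integral_add_adjacent_intervals
    (intervalIntegrable_of_integrableOn_Icc hf hu hus)
    (intervalIntegrable_of_integrableOn_Icc hf hs hst)
  linarith [integral_le_queueLength hC hu (hus.trans hst), neg_abs_le (∫ v in s..t, f v),
    abs_integral_le_of_abs_le hC hs hst]

lemma lipschitzOnWith_queueLength (hf : ∀ t, IntegrableOn f (Icc 0 t))
    (hC : ∀ v, 0 ≤ v → |f v| ≤ C) : LipschitzOnWith C.toNNReal (queueLength f) (Ici 0) := by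
  refine LipschitzOnWith.of_le_add_mul' C fun t ht s hs => ?_
  rw [Real.dist_eq]
  rcases le_total s t with hst | hts
  · rw [abs_of_nonneg (sub_nonneg.2 hst)]
    exact queueLength_le_add_of_le hf hC hs hst
  · rw [abs_of_nonpos (sub_nonpos.2 hts), neg_sub]
    exact queueLength_le_add_of_ge hf hC ht hts

lemma intervalIntegrable_queueLength (hf : ∀ t, IntegrableOn f (Icc 0 t))
    (hC : ∀ v, 0 ≤ v → |f v| ≤ C) (hu : 0 ≤ u) (hw : 0 ≤ w) :
    IntervalIntegrable (queueLength f) volume u w :=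
  ((lipschitzOnWith_queueLength hf hC).continuousOn.mono
    fun _ hv => (le_min hu hw).trans hv.1).intervalIntegrable

lemma integral_queueLength_mono (hf : ∀ t, IntegrableOn f (Icc 0 t))
    (hC : ∀ v, 0 ≤ v → |f v| ≤ C) (hu : 0 ≤ u) (huw : u ≤ w) :
    ∫ t in (0 : ℝ)..u, queueLength f t ≤ ∫ t in (0 : ℝ)..w, queueLength f t :=
  intervalIntegral.integral_mono_interval le_rfl hu huw
    (ae_restrict_of_forall_mem measurableSet_Ioc fun _ ht => queueLength_nonneg hC ht.1.le)
    (intervalIntegrable_queueLength hf hC le_rfl (hu.trans huw))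

lemma mul_sub_le_queueLength (hC : ∀ v, 0 ≤ v → |f v| ≤ C) (hc : EqOn f (fun _ => c) (Ioo s t))
    (hs : 0 ≤ s) (hst : s ≤ t) : c * (t - s) ≤ queueLength f t := by
  calc c * (t - s) = ∫ v in s..t, f v := by
        rw [intervalIntegral.integral_of_le hst, integral_Ioc_eq_integral_Ioo,
          setIntegral_congr_fun measurableSet_Ioo hc, setIntegral_const,
          Real.volume_real_Ioo_of_le hst, smul_eq_mul, mul_comm]
    _ ≤ queueLength f t := integral_le_queueLength hC hs hst

lemma half_mul_sq_le_integral_queueLength (hf : ∀ t, IntegrableOn f (Icc 0 t))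
    (hC : ∀ v, 0 ≤ v → |f v| ≤ C) (hc : EqOn f (fun _ => c) (Ioo s (s + x))) (hs : 0 ≤ s)
    (hx : 0 ≤ x) : c / 2 * x ^ 2 ≤ ∫ t in s..s + x, queueLength f t := by
  have hsx : s ≤ s + x := le_add_of_nonneg_right hx
  calc c / 2 * x ^ 2 = ∫ t in s..s + x, c * (t - s) := by
        rw [intervalIntegral.integral_const_mul,
          intervalIntegral.integral_comp_sub_right (fun t => t), integral_id]
        ring
    _ ≤ ∫ t in s..s + x, queueLength f t :=
        intervalIntegral.integral_mono_on hsx (Continuous.intervalIntegrable (by fun_prop) _ _)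
          (intervalIntegrable_queueLength hf hC hs (hs.trans hsx))
          fun t ht => mul_sub_le_queueLength hC (hc.mono (Ioo_subset_Ioo_right ht.2)) hs ht.1

end QueueLength

lemma exists_le_lt_succ_of_tendsto_atTop {T : ℕ → ℝ} (hT : Tendsto T atTop atTop) {t : ℝ}
    (ht : T 0 ≤ t) : ∃ i, T i ≤ t ∧ t < T (i + 1) := by
  classical
  have hex : ∃ k, t < T k := (hT.eventually_gt_atTop t).exists
  obtain ⟨i, hi⟩ : ∃ i, Nat.find hex = i + 1 :=
    Nat.exists_eq_succ_of_ne_zero fun h => (Nat.find_spec hex).not_ge (h ▸ ht)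
  exact ⟨i, not_lt.1 (Nat.find_min hex (by omega)), hi ▸ Nat.find_spec hex⟩

lemma tendsto_atTop_of_le_of_mem_Ico {T g : ℕ → ℝ} {G : ℝ → ℝ} (hT : Monotone T)
    (hTtop : Tendsto T atTop atTop) (hg : Tendsto g atTop atTop)
    (hG : ∀ n R, 0 < R → T n ≤ R → R < T (n + 1) → g n ≤ G R) : Tendsto G atTop atTop := by
  refine tendsto_atTop.2 fun M => ?_
  obtain ⟨N, hN⟩ := eventually_atTop.1 (tendsto_atTop.1 hg M)
  filter_upwards [eventually_ge_atTop (T N), eventually_gt_atTop 0] with R hNR hR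
  obtain ⟨n, hnR, hRn⟩ := exists_le_lt_succ_of_tendsto_atTop hTtop ((hT N.zero_le).trans hNR)
  have hNn : N ≤ n := by
    by_contra! h
    linarith [hT (Nat.succ_le_of_lt h)]
  exact (hN n hNn).trans (hG n R hR hnR hRn)

lemma tendsto_div_succ_atTop {S V : ℕ → ℝ} {μ : ℝ} (hμ : 0 < μ)
    (hS : Tendsto (fun n : ℕ => S n / n) atTop (𝓝 μ))
    (hV : Tendsto (fun n : ℕ => V n / n) atTop atTop) :
    Tendsto (fun n => V n / S (n + 1)) atTop atTop := by
  have hS' : Tendsto (fun n : ℕ => S (n + 1) / n) atTop (𝓝 μ) := by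
    have h := (hS.comp (tendsto_add_atTop_nat 1)).div (tendsto_natCast_div_add_atTop (1 : ℝ))
      one_ne_zero
    rw [div_one] at h
    refine h.congr' ((eventually_ne_atTop 0).mono fun n hn => ?_)
    have : (n : ℝ) ≠ 0 := Nat.cast_ne_zero.2 hn
    simp only [Pi.div_apply, Function.comp_apply, Nat.cast_add, Nat.cast_one]
    field_simp
  refine (hV.atTop_mul_pos (inv_pos.2 hμ) (hS'.inv₀ hμ.ne')).congr' ?_
  filter_upwards [eventually_ne_atTop 0] with n hn
  have : (n : ℝ) ≠ 0 := Nat.cast_ne_zero.2 hn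
  simp only [inv_div]
  field_simp

structure IsOnOffProcess (a r : ℝ) (x T : ℕ → ℝ) (A : ℝ → ℝ) : Prop where
  nonneg : ∀ i, 0 ≤ x i
  one_le : 1 ≤ r
  cycle_eq : ∀ N, T N = r * ∑ i ∈ range N, x i
  on : ∀ i t, T i ≤ t → t < T i + x i → A t = a
  off : ∀ i t, T i + x i ≤ t → t < T (i + 1) → A t = 0

namespace IsOnOffProcess

variable {a r μ : ℝ} {x T : ℕ → ℝ} {A : ℝ → ℝ}

lemma cycle_zero (h : IsOnOffProcess a r x T A) : T 0 = 0 := by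
  simp [h.cycle_eq]

lemma add_le_cycle_succ (h : IsOnOffProcess a r x T A) (i : ℕ) : T i + x i ≤ T (i + 1) := by
  rw [h.cycle_eq, h.cycle_eq, sum_range_succ]
  nlinarith [h.nonneg i, h.one_le]

lemma monotone_cycle (h : IsOnOffProcess a r x T A) : Monotone T :=
  monotone_nat_of_le_succ fun i => by linarith [h.add_le_cycle_succ i, h.nonneg i]

lemma cycle_nonneg (h : IsOnOffProcess a r x T A) (i : ℕ) : 0 ≤ T i :=
  h.cycle_zero ▸ h.monotone_cycle i.zero_le

lemma tendsto_cycle_atTop (h : IsOnOffProcess a r x T A) (hμ : 0 < μ)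
    (hS : Tendsto (fun n : ℕ => (∑ i ∈ range n, x i) / n) atTop (𝓝 μ)) :
    Tendsto T atTop atTop := by
  have hsum : Tendsto (fun n : ℕ => (n : ℝ) * ((∑ i ∈ range n, x i) / n)) atTop atTop :=
    tendsto_natCast_atTop_atTop.atTop_mul_pos hμ hS
  refine (hsum.const_mul_atTop (zero_lt_one.trans_le h.one_le)).congr' ?_
  filter_upwards [eventually_ne_atTop 0] with n hn
  rw [h.cycle_eq, mul_div_cancel₀ _ (Nat.cast_ne_zero.2 hn)]

lemma eqOn_indicator (h : IsOnOffProcess a r x T A) (hT : Tendsto T atTop atTop) :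
    EqOn A ((⋃ i, Ico (T i) (T i + x i)).indicator fun _ => a) (Ici 0) := by
  intro t ht
  by_cases hmem : t ∈ ⋃ i, Ico (T i) (T i + x i)
  · obtain ⟨j, hj⟩ := mem_iUnion.1 hmem
    rw [indicator_of_mem hmem, h.on j t hj.1 hj.2]
  · obtain ⟨i, hit, hti⟩ := exists_le_lt_succ_of_tendsto_atTop hT (h.cycle_zero ▸ ht)
    rw [indicator_of_notMem hmem,
      h.off i t (not_lt.1 fun hlt => hmem (mem_iUnion.2 ⟨i, hit, hlt⟩)) hti]

lemma integrableOn_sub_one (h : IsOnOffProcess a r x T A) (hT : Tendsto T atTop atTop) (t : ℝ) :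
    IntegrableOn (A · - 1) (Icc 0 t) := by
  have hind : IntegrableOn ((⋃ i, Ico (T i) (T i + x i)).indicator fun _ => a) (Icc 0 t) :=
    (integrableOn_const measure_Icc_lt_top.ne).indicator
      (MeasurableSet.iUnion fun _ => measurableSet_Ico)
  refine (hind.sub (integrableOn_const (C := (1 : ℝ)) measure_Icc_lt_top.ne)).congr_fun
    (fun v hv => ?_) measurableSet_Icc
  simp only [Pi.sub_apply, h.eqOn_indicator hT hv.1]

lemma abs_sub_one_le (h : IsOnOffProcess a r x T A) (hT : Tendsto T atTop atTop) (ha : 1 ≤ a)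
    (t : ℝ) (ht : 0 ≤ t) : |A t - 1| ≤ a := by
  classical
  rw [h.eqOn_indicator hT ht, indicator_apply]
  split_ifs <;> rw [abs_le] <;> constructor <;> linarith

lemma half_mul_sq_le_integral_cycle (h : IsOnOffProcess a r x T A) (hT : Tendsto T atTop atTop)
    (ha : 1 ≤ a) (i : ℕ) :
    (a - 1) / 2 * x i ^ 2 ≤ ∫ t in T i..T (i + 1), queueLength (A · - 1) t :=
  calc (a - 1) / 2 * x i ^ 2 ≤ ∫ t in T i..T i + x i, queueLength (A · - 1) t :=
        half_mul_sq_le_integral_queueLength (h.integrableOn_sub_one hT) (h.abs_sub_one_le hT ha)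
          (fun v hv => by simp only [h.on i v hv.1.le hv.2]) (h.cycle_nonneg i) (h.nonneg i)
    _ ≤ ∫ t in T i..T (i + 1), queueLength (A · - 1) t :=
        intervalIntegral.integral_mono_interval le_rfl (le_add_of_nonneg_right (h.nonneg i))
          (h.add_le_cycle_succ i)
          (ae_restrict_of_forall_mem measurableSet_Ioc fun _ ht =>
            queueLength_nonneg (h.abs_sub_one_le hT ha) ((h.cycle_nonneg i).trans ht.1.le))
          (intervalIntegrable_queueLength (h.integrableOn_sub_one hT) (h.abs_sub_one_le hT ha)
            (h.cycle_nonneg i) (h.cycle_nonneg (i + 1)))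

lemma half_mul_sum_sq_le_integral (h : IsOnOffProcess a r x T A) (hT : Tendsto T atTop atTop)
    (ha : 1 ≤ a) (N : ℕ) :
    (a - 1) / 2 * ∑ i ∈ range N, x i ^ 2 ≤ ∫ t in (0 : ℝ)..T N, queueLength (A · - 1) t := by
  rw [← h.cycle_zero, mul_sum, ← intervalIntegral.sum_integral_adjacent_intervals fun k _ =>
    intervalIntegrable_queueLength (h.integrableOn_sub_one hT) (h.abs_sub_one_le hT ha)
      (h.cycle_nonneg k) (h.cycle_nonneg (k + 1))]
  exact sum_le_sum fun i _ => h.half_mul_sq_le_integral_cycle hT ha i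

theorem tendsto_average_queueLength_atTop (h : IsOnOffProcess a r x T A) (ha : 1 < a)
    (hμ : 0 < μ) (hS : Tendsto (fun n : ℕ => (∑ i ∈ range n, x i) / n) atTop (𝓝 μ))
    (hV : Tendsto (fun n : ℕ => (∑ i ∈ range n, x i ^ 2) / n) atTop atTop) :
    Tendsto (fun R => 1 / R * ∫ t in (0 : ℝ)..R, queueLength (A · - 1) t) atTop atTop := by
  have hT := h.tendsto_cycle_atTop hμ hS
  have hr : 0 < r := zero_lt_one.trans_le h.one_le
  refine tendsto_atTop_of_le_of_mem_Ico h.monotone_cycle hT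
    ((tendsto_div_succ_atTop hμ hS hV).const_mul_atTop (by positivity : 0 < (a - 1) / (2 * r)))
    fun n R hR hnR hRn => ?_
  have hV0 : 0 ≤ (a - 1) / 2 * ∑ i ∈ range n, x i ^ 2 := by
    have := sub_pos.2 ha
    positivity
  calc (a - 1) / (2 * r) * ((∑ i ∈ range n, x i ^ 2) / ∑ i ∈ range (n + 1), x i)
      = (a - 1) / 2 * (∑ i ∈ range n, x i ^ 2) / T (n + 1) := by rw [h.cycle_eq]; ring
    _ ≤ (a - 1) / 2 * (∑ i ∈ range n, x i ^ 2) / R := div_le_div_of_nonneg_left hV0 hR hRn.le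
    _ ≤ (∫ t in (0 : ℝ)..T n, queueLength (A · - 1) t) / R :=
        div_le_div_of_nonneg_right (h.half_mul_sum_sq_le_integral hT ha.le n) hR.le
    _ ≤ (∫ t in (0 : ℝ)..R, queueLength (A · - 1) t) / R :=
        div_le_div_of_nonneg_right (integral_queueLength_mono (h.integrableOn_sub_one hT)
          (h.abs_sub_one_le hT ha.le) (h.cycle_nonneg n) hnR) hR.le
    _ = 1 / R * ∫ t in (0 : ℝ)..R, queueLength (A · - 1) t := by ring

end IsOnOffProcess

section StrongLaw

variable {Ω : Type*} {m : MeasurableSpace Ω} {μ : Measure Ω} [IsFiniteMeasure μ]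

lemma integrable_min_of_nonneg {f : Ω → ℝ} (hf : AEMeasurable f μ) (hnonneg : 0 ≤ᵐ[μ] f)
    {c : ℝ} (hc : 0 ≤ c) : Integrable (fun ω => min (f ω) c) μ :=
  Integrable.of_bound (hf.min aemeasurable_const).aestronglyMeasurable c
    (hnonneg.mono fun ω hω => by
      rw [Real.norm_of_nonneg (le_min hω hc)]
      exact min_le_right _ _)

lemma exists_lt_integral_min_of_lintegral_eq_top {f : Ω → ℝ} (hf : AEMeasurable f μ)
    (hnonneg : 0 ≤ᵐ[μ] f) (htop : ∫⁻ ω, ENNReal.ofReal (f ω) ∂μ = ⊤) (C : ℝ) :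
    ∃ M : ℕ, C < ∫ ω, min (f ω) M ∂μ := by
  have hlim : Tendsto (fun M : ℕ => ∫⁻ ω, ENNReal.ofReal (min (f ω) M) ∂μ) atTop (𝓝 ⊤) := by
    rw [← htop]
    refine lintegral_tendsto_of_tendsto_of_monotone
      (fun M => (hf.min aemeasurable_const).ennreal_ofReal)
      (ae_of_all _ fun ω M M' hMM' => ENNReal.ofReal_le_ofReal (by gcongr))
      (ae_of_all _ fun ω => tendsto_const_nhds.congr' ?_)
    filter_upwards [eventually_ge_atTop ⌈f ω⌉₊] with M hM
    rw [min_eq_left ((Nat.le_ceil _).trans (Nat.cast_le.2 hM))]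
  obtain ⟨M, hM⟩ := (hlim.eventually (lt_mem_nhds ENNReal.ofReal_lt_top : ∀ᶠ y in 𝓝 ⊤,
    ENNReal.ofReal C < y)).exists
  rw [← ofReal_integral_eq_lintegral_ofReal (integrable_min_of_nonneg hf hnonneg M.cast_nonneg)
    (hnonneg.mono fun ω hω => le_min hω M.cast_nonneg)] at hM
  exact ⟨M, (ENNReal.ofReal_lt_ofReal_iff'.1 hM).1⟩

theorem strong_law_ae_of_lintegral_eq_top (Y : ℕ → Ω → ℝ) (hnonneg : 0 ≤ᵐ[μ] Y 0)
    (htop : ∫⁻ ω, ENNReal.ofReal (Y 0 ω) ∂μ = ⊤) (hindep : Pairwise fun i j => Y i ⟂ᵢ[μ] Y j)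
    (hident : ∀ i, IdentDistrib (Y i) (Y 0) μ μ) :
    ∀ᵐ ω ∂μ, Tendsto (fun n : ℕ => (∑ i ∈ range n, Y i ω) / n) atTop atTop := by
  have htrunc (M : ℕ) : ∀ᵐ ω ∂μ, Tendsto (fun n : ℕ => (∑ i ∈ range n, min (Y i ω) M) / n)
      atTop (𝓝 (∫ ω, min (Y 0 ω) M ∂μ)) := by
    have hφ : Measurable fun y : ℝ => min y M := measurable_id.min measurable_const
    exact strong_law_ae_real (fun i ω => min (Y i ω) M)
      (integrable_min_of_nonneg (hident 0).aemeasurable_fst hnonneg M.cast_nonneg)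
      (fun i j hij => (hindep hij).comp hφ hφ) (fun i => (hident i).comp hφ)
  filter_upwards [ae_all_iff.2 htrunc] with ω hω
  refine tendsto_atTop.2 fun C => ?_
  obtain ⟨M, hM⟩ := exists_lt_integral_min_of_lintegral_eq_top (hident 0).aemeasurable_fst
    hnonneg htop C
  filter_upwards [(hω M).eventually (eventually_ge_nhds hM)] with n hn
  exact hn.trans (div_le_div_of_nonneg_right (sum_le_sum fun i _ => min_le_left _ _) n.cast_nonneg)

end StrongLaw

theorem stmt_5_general {Ω : Type*} [MeasureSpace Ω] [IsProbabilityMeasure (ℙ : Measure Ω)]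
    (a lam : ℝ) (ha : 1 < a) (hlam : lam ∈ Set.Ioo (0:ℝ) 1)
    (X : ℕ → Ω → ℝ)
    (hpos : ∀ i ω, 0 < X i ω)
    (hindep : iIndepFun X ℙ)
    (hident : ∀ i, IdentDistrib (X i) (X 0) ℙ ℙ)
    (hint : Integrable (X 0) ℙ)
    (hmean : 0 < ∫ ω, X 0 ω)
    (hsq : ∫⁻ ω, ENNReal.ofReal ((X 0 ω) ^ 2) = ⊤)
    (T : Ω → ℕ → ℝ)
    (hT : ∀ ω N, T ω N = (a / lam) * ∑ i ∈ Finset.range N, X i ω)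
    (A : Ω → ℝ → ℝ)
    (hAon : ∀ ω i, ∀ t, T ω i ≤ t → t < T ω i + X i ω → A ω t = a)
    (hAoff : ∀ ω i, ∀ t, T ω i + X i ω ≤ t → t < T ω (i + 1) → A ω t = 0)
    (Q : Ω → ℝ → ℝ)
    (hQ : ∀ ω t, Q ω t = ⨆ u : Set.Icc (0:ℝ) t, ∫ v in (u : ℝ)..t, (A ω v - 1)) :
    ∀ᵐ ω ∂ℙ, Tendsto (fun R : ℝ => (1 / R) * ∫ t in (0:ℝ)..R, Q ω t) atTop atTop := by
  have hsq_meas : Measurable fun y : ℝ => y ^ 2 := measurable_id.pow_const 2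
  have hsq_avg := strong_law_ae_of_lintegral_eq_top (fun i ω => X i ω ^ 2)
    (ae_of_all _ fun ω => sq_nonneg _) hsq
    (fun i j hij => (hindep.indepFun hij).comp hsq_meas hsq_meas)
    (fun i => (hident i).comp hsq_meas)
  filter_upwards [strong_law_ae_real X hint (fun i j hij => hindep.indepFun hij) hident, hsq_avg]
    with ω hmean_avg hsq_avg
  have hA : IsOnOffProcess a (a / lam) (X · ω) (T ω) (A ω) :=
    { nonneg := fun i => (hpos i ω).le
      one_le := (one_le_div hlam.1).2 (by linarith [hlam.2])
      cycle_eq := hT ω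
      on := hAon ω
      off := hAoff ω }
  rw [show Q ω = queueLength (A ω · - 1) from funext (hQ ω)]
  exact hA.tendsto_average_queueLength_atTop ha hmean hmean_avg hsq_avg

/-- Theorem 1, pathwise form: for `a > 1`, `λ ∈ (0,1)` and an
i.i.d. sequence `(Xᵢ)` of positive random variables with finite positive mean and
infinite second moment, the reordered on/off process `A'` (cycle endpoints
`T N ω = (a/λ) Σ_{i<N} Xᵢ ω`, rate `a` on `[T i, T i + Xᵢ)`, `0` on
`[T i + Xᵢ, T (i+1))`) with queue `Q ω t = sup_{0 ≤ s ≤ t} ∫_s^t (A' ω u - 1) du`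
satisfies, almost surely, `(1/T) ∫_0^T Q ω t dt → ∞` as `T → ∞`. -/
theorem stmt_5 {Ω : Type*} [MeasureSpace Ω] [IsProbabilityMeasure (ℙ : Measure Ω)]
    (a lam : ℝ) (ha : 1 < a) (hlam : lam ∈ Set.Ioo (0:ℝ) 1)
    (X : ℕ → Ω → ℝ) (hmeas : ∀ i, Measurable (X i))
    (hpos : ∀ i ω, 0 < X i ω)
    (hindep : iIndepFun X ℙ)
    (hident : ∀ i, IdentDistrib (X i) (X 0) ℙ ℙ)
    (hint : Integrable (X 0) ℙ)
    (hmean : 0 < ∫ ω, X 0 ω)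
    (hsq : ∫⁻ ω, ENNReal.ofReal ((X 0 ω) ^ 2) = ⊤)
    (T : Ω → ℕ → ℝ)
    (hT : ∀ ω N, T ω N = (a / lam) * ∑ i ∈ Finset.range N, X i ω)
    (A : Ω → ℝ → ℝ)
    (hAon : ∀ ω i, ∀ t, T ω i ≤ t → t < T ω i + X i ω → A ω t = a)
    (hAoff : ∀ ω i, ∀ t, T ω i + X i ω ≤ t → t < T ω (i + 1) → A ω t = 0)
    (Q : Ω → ℝ → ℝ)
    (hQ : ∀ ω t, Q ω t = ⨆ u : Set.Icc (0:ℝ) t, ∫ v in (u : ℝ)..t, (A ω v - 1)) :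
    ∀ᵐ ω ∂ℙ, Tendsto (fun R : ℝ => (1 / R) * ∫ t in (0:ℝ)..R, Q ω t) atTop atTop :=
  stmt_5_general a lam ha hlam X hpos hindep hident hint hmean hsq T hT A hAon hAoff Q hQ
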